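/- Let r be a real number with |r| < 1. Define W(r) = ∑_{n odd, n≥1} ζ(n+1) r^{n+1} and W̄(r) = ∑_{n odd, n≥3} ζ(n) r^n. Then W(r) − W̄(r) = r ( −1/(1 + r) + (r + 1) ∑_{n≥1} 1/(n(n + 1 + r)) ). -/
import Mathlib

open Filter Topology Finset


private lemma sq_sum' : Summable (fun n : ℕ => 1 / ((n:ℝ)+1)^2) := by
  have h := ((Real.summable_one_div_nat_pow (p := 2)).mpr one_lt_two)
  have := (summable_nat_add_iff 1).mpr h
  exact this.congr (by intro n; push_cast; ring)

private lemma sum_of_bound (f : ℕ → ℝ) (c : ℝ) (h : ∀ n, |f n| ≤ c / ((n:ℝ)+1)^2) :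
    Summable f := by
  rw [← summable_abs_iff]
  exact Summable.of_nonneg_of_le (fun n => abs_nonneg _) h (sq_sum'.mul_left c |>.congr (by
    intro n; simp [div_eq_mul_inv, mul_comm]))

private lemma zre (m : ℕ) (hm : 1 < m) : (riemannZeta m).re = ∑' n : ℕ, 1 / (n:ℝ)^m := by
  rw [zeta_nat_eq_tsum_of_gt_one hm]
  have : (∑' n : ℕ, 1 / (n:ℂ)^m) = ((∑' n : ℕ, 1 / (n:ℝ)^m : ℝ) : ℂ) := by
    rw [Complex.ofReal_tsum]; push_cast; rfl
  rw [this, Complex.ofReal_re]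

private lemma lineSummable (x : ℝ) (m : ℕ) (hm : 1 < m) :
    Summable (fun n : ℕ => (x/(n:ℝ))^m) :=
  ((Real.summable_one_div_nat_pow.mpr hm).mul_left (x^m)).congr
    (fun n => by rw [div_pow]; ring)

private lemma lineBound (x : ℝ) (hx : 0 ≤ x) (m : ℕ) (hm : 2 ≤ m) :
    ∑' n : ℕ, (x/(n:ℝ))^m ≤ x^m * ∑' n : ℕ, 1/(n:ℝ)^2 := by
  have h2 : Summable (fun n : ℕ => 1/(n:ℝ)^2) := Real.summable_one_div_nat_pow.mpr one_lt_two
  have key : ∀ n : ℕ, (x/(n:ℝ))^m ≤ x^m * (1/(n:ℝ)^2) := by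
    intro n
    rcases n with _ | n
    · simp [zero_pow (by omega : m ≠ 0)]
    · have hn1 : (1:ℝ) ≤ (n:ℝ)+1 := by have : (0:ℝ) ≤ n := n.cast_nonneg; linarith
      have h0 : (0:ℝ) < ((n:ℝ)+1)^2 := by positivity
      have hle : ((n:ℝ)+1)^2 ≤ ((n:ℝ)+1)^m := pow_le_pow_right₀ hn1 hm
      rw [div_pow]
      push_cast
      calc x^m / ((n:ℝ)+1)^m ≤ x^m / ((n:ℝ)+1)^2 :=
            div_le_div_of_nonneg_left (by positivity) h0 hle
        _ = x^m * (1/((n:ℝ)+1)^2) := by ring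
  exact le_trans (Summable.tsum_le_tsum key (lineSummable x m (by omega)) (h2.mul_left _))
    (le_of_eq (tsum_mul_left))

private lemma outerSummable (x : ℝ) (hx0 : 0 ≤ x) (hx : x < 1) (j : ℕ) :
    Summable (fun k : ℕ => ∑' n : ℕ, (x/(n:ℝ))^(2*k+2+j)) := by
  set C : ℝ := ∑' n : ℕ, 1/(n:ℝ)^2 with hC
  have hC0 : 0 ≤ C := tsum_nonneg (fun n => by positivity)
  have hgeom : Summable (fun k : ℕ => (x^2)^k * (x^2 * C)) :=
    (summable_geometric_of_lt_one (by positivity) (by nlinarith)).mul_right _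
  refine Summable.of_nonneg_of_le (fun k => tsum_nonneg (fun n => by positivity)) ?_ hgeom
  intro k
  refine le_trans (lineBound x hx0 _ (by omega)) ?_
  have hxp : x^(2*k+2+j) ≤ (x^2)^k * x^2 := by
    have : (x^2)^k * x^2 = x^(2*k+2) := by rw [← pow_mul, ← pow_add]
    rw [this]
    calc x^(2*k+2+j) = x^(2*k+2) * x^j := by rw [pow_add]
      _ ≤ x^(2*k+2) * 1 := by
          exact mul_le_mul_of_nonneg_left (pow_le_one₀ hx0 hx.le) (by positivity)
      _ = x^(2*k+2) := mul_one _
  calc x^(2*k+2+j) * C ≤ ((x^2)^k * x^2) * C := mul_le_mul_of_nonneg_right hxp hC0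
    _ = (x^2)^k * (x^2 * C) := by ring

private lemma geomAux (x : ℝ) (hx : |x| < 1) (j : ℕ) :
    HasSum (fun k : ℕ => x^(2*k+2+j)) (x^(2+j) * (1 - x^2)⁻¹) := by
  have hx2 : x^2 < 1 := by nlinarith [abs_nonneg x, sq_abs x]
  have h := (hasSum_geometric_of_lt_one (sq_nonneg x) hx2).mul_left (x^(2+j))
  exact h.congr_fun (fun k => by rw [← pow_mul, ← pow_add]; ring_nf)

private lemma algebra1 (r t : ℝ) (h1 : 1 ≤ t) (hr : |r| < 1) :
    (r/t)^2*(1-(r/t)^2)⁻¹ - (r/t)^3*(1-(r/t)^2)⁻¹ = r^2/(t*(t+r)) := by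
  have ht : 0 < t := lt_of_lt_of_le one_pos h1
  have htr : 0 < t + r := by have := (abs_lt.mp hr).1; linarith
  have hxa : |r/t| < 1 := by
    rw [abs_div, abs_of_pos ht]
    exact lt_of_le_of_lt (div_le_self (abs_nonneg r) h1) hr
  have hx2 : (r/t)^2 < 1 := by nlinarith [sq_abs (r/t), abs_nonneg (r/t)]
  have h2 : 1 - (r/t)^2 ≠ 0 := by linarith
  rw [show (r/t)^2*(1-(r/t)^2)⁻¹ - (r/t)^3*(1-(r/t)^2)⁻¹
      = ((r/t)^2-(r/t)^3)/(1-(r/t)^2) by ring,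
    div_eq_div_iff (fun h => h2 (by linarith [h] )) (by positivity : (0:ℝ) < t*(t+r)).ne']
  field_simp
  ring

/-- `W(r) = ∑_{n odd, n ≥ 1} ζ(n+1) r^(n+1)` (sum over odd `n = 2k+1`). -/
noncomputable def W (r : ℝ) : ℝ :=
  ∑' k : ℕ, (riemannZeta (2 * k + 2)).re * r ^ (2 * k + 2)

/-- `W̄(r) = ∑_{n odd, n ≥ 3} ζ(n) r^n` (sum over odd `n = 2k+3`). -/
noncomputable def Wbar (r : ℝ) : ℝ :=
  ∑' k : ℕ, (riemannZeta (2 * k + 3)).re * r ^ (2 * k + 3)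

private lemma part1 (r : ℝ) (hr : |r| < 1) :
    W r - Wbar r = ∑' n : ℕ, r^2 / ((n:ℝ) * ((n:ℝ) + r)) := by
  have habs2 : ∀ (n : ℕ) (e : ℕ), (|r|/(n:ℝ))^e = |(r/(n:ℝ))^e| := by
    intro n e; rw [abs_pow, abs_div, Nat.abs_cast]
  have hFsum : Summable (Function.uncurry (fun (k n : ℕ) => (r/(n:ℝ))^(2*k+2))) := by
    rw [← summable_abs_iff]
    refine (summable_prod_of_nonneg (fun p => abs_nonneg _)).mpr
      ⟨fun k => (lineSummable r _ (by omega : 1 < 2*k+2)).abs, ?_⟩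
    refine (outerSummable |r| (abs_nonneg r) hr 0).congr fun k => tsum_congr fun n => ?_
    simp only [Function.uncurry]
    rw [← habs2]
  have hGsum : Summable (Function.uncurry (fun (k n : ℕ) => (r/(n:ℝ))^(2*k+3))) := by
    rw [← summable_abs_iff]
    refine (summable_prod_of_nonneg (fun p => abs_nonneg _)).mpr
      ⟨fun k => (lineSummable r _ (by omega : 1 < 2*k+3)).abs, ?_⟩
    refine (outerSummable |r| (abs_nonneg r) hr 1).congr fun k => tsum_congr fun n => ?_
    simp only [Function.uncurry]
    rw [← habs2, show 2*k+2+1 = 2*k+3 by omega]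
  -- W as a double sum
  have hW : W r = ∑' (n : ℕ) (k : ℕ), (r/(n:ℝ))^(2*k+2) := by
    rw [W, Summable.tsum_comm hFsum]
    refine tsum_congr fun k => ?_
    rw [show (2*(k:ℂ)+2) = ((2*k+2 : ℕ) : ℂ) by push_cast; ring,
      zre (2*k+2) (by omega), ← tsum_mul_right]
    exact tsum_congr fun n => by rw [div_pow]; ring
  have hWbar : Wbar r = ∑' (n : ℕ) (k : ℕ), (r/(n:ℝ))^(2*k+3) := by
    rw [Wbar, Summable.tsum_comm hGsum]
    refine tsum_congr fun k => ?_
    rw [show (2*(k:ℂ)+3) = ((2*k+3 : ℕ) : ℂ) by push_cast; ring,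
      zre (2*k+3) (by omega), ← tsum_mul_right]
    exact tsum_congr fun n => by rw [div_pow]; ring
  have hA : Summable (fun n : ℕ => ∑' k : ℕ, (r/(n:ℝ))^(2*k+2)) := hFsum.prod_symm.prod
  have hB : Summable (fun n : ℕ => ∑' k : ℕ, (r/(n:ℝ))^(2*k+3)) := hGsum.prod_symm.prod
  rw [hW, hWbar, ← Summable.tsum_sub hA hB]
  refine tsum_congr fun n => ?_
  rcases n with _ | n
  · simp [zero_pow]
  · set x : ℝ := r / ((n:ℝ)+1) with hxdef
    have hn1 : (1:ℝ) ≤ (n:ℝ)+1 := by have : (0:ℝ) ≤ n := n.cast_nonneg; linarith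
    have hx : |x| < 1 := by
      rw [hxdef, abs_div, abs_of_nonneg (by linarith : (0:ℝ) ≤ (n:ℝ)+1)]
      exact lt_of_le_of_lt (div_le_self (abs_nonneg r) hn1) hr
    have e1 : ∑' (k:ℕ), (r/((n:ℝ)+1))^(2*k+2) = x^2*(1-x^2)⁻¹ := by
      simpa using (geomAux x hx 0).tsum_eq
    have e2 : ∑' (k:ℕ), (r/((n:ℝ)+1))^(2*k+3) = x^3*(1-x^2)⁻¹ := by
      simpa [add_assoc] using (geomAux x hx 1).tsum_eq
    push_cast
    rw [e1, e2]
    exact algebra1 r ((n:ℝ)+1) hn1 hr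

private lemma part2 (r : ℝ) (hr : |r| < 1) :
    ∑' n : ℕ, r^2/((n:ℝ)*((n:ℝ)+r))
      = r * (-1/(1+r)
          + (r+1) * ∑' n : ℕ, 1 / (((n : ℝ) + 1) * (((n : ℝ) + 1) + 1 + r))) := by
  obtain ⟨hr1, hr2⟩ := abs_lt.mp hr
  have hrpos : (0:ℝ) < 1 + r := by linarith
  have habs : (0:ℝ) < 1 - |r| := by linarith [abs_lt.mpr ⟨hr1, hr2⟩]
  -- basic positivity facts
  have hp1 : ∀ n : ℕ, (0:ℝ) < (n:ℝ)+1 := fun n => by positivity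
  have hp2 : ∀ n : ℕ, (0:ℝ) < (n:ℝ)+1+r := fun n => by
    have := (hp1 n).le; have := n.cast_nonneg (α := ℝ); linarith
  have hp3 : ∀ n : ℕ, (0:ℝ) < (n:ℝ)+2+r := fun n => by
    have := hp2 n; linarith
  have hlow : ∀ n : ℕ, ((n:ℝ)+1)*(1-|r|) ≤ (n:ℝ)+1+r := fun n => by
    have h1 : ((n:ℝ))*|r| ≥ 0 := by positivity
    nlinarith [neg_abs_le r]
  -- summability of the three series
  have hT : Summable (fun n : ℕ => r^2/(((n:ℝ)+1)*(((n:ℝ)+1)+r))) := by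
    refine sum_of_bound _ (r^2/(1-|r|)) (fun n => ?_)
    have hd : (0:ℝ) < ((n:ℝ)+1)*(((n:ℝ)+1)+r) := by
      have := hp1 n; have := hp2 n; positivity
    rw [abs_of_nonneg (by positivity)]
    rw [div_le_div_iff₀ hd (by positivity)]
    have hc : r^2/(1-|r|)*(1-|r|) = r^2 := div_mul_cancel₀ _ habs.ne'
    nlinarith [mul_le_mul_of_nonneg_left (hlow n)
      (by positivity : (0:ℝ) ≤ r^2/(1-|r|)*((n:ℝ)+1)), hc, hp1 n]
  have hS : Summable (fun n : ℕ => 1 / (((n:ℝ)+1)*(((n:ℝ)+1)+1+r))) := by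
    refine sum_of_bound _ (1/(1-|r|)) (fun n => ?_)
    have hd : (0:ℝ) < ((n:ℝ)+1)*(((n:ℝ)+1)+1+r) := by
      have := hp1 n; have := hp3 n; have h : ((n:ℝ)+1)+1+r = (n:ℝ)+2+r := by ring
      rw [h] at *; positivity
    rw [abs_of_nonneg (by positivity)]
    rw [div_le_div_iff₀ hd (by positivity)]
    have h2 : ((n:ℝ)+1)*(1-|r|) ≤ ((n:ℝ)+1)+1+r := by linarith [hlow n]
    have hc : 1/(1-|r|)*(1-|r|) = 1 := div_mul_cancel₀ _ habs.ne'
    nlinarith [mul_le_mul_of_nonneg_left h2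
      (by positivity : (0:ℝ) ≤ 1/(1-|r|)*((n:ℝ)+1)), hc, hp1 n]
  -- the telescoping sum
  have hdsum : HasSum (fun n : ℕ => r/((n:ℝ)+1+r) - r/((n:ℝ)+2+r)) (r/(1+r)) := by
    apply (hasSum_iff_tendsto_nat_of_summable_norm ?_).mpr ?_
    · refine sum_of_bound _ (|r|/((1-|r|)*(1-|r|))) (fun n => ?_)
      rw [Real.norm_eq_abs, abs_abs]
      have hee : r/((n:ℝ)+1+r) - r/((n:ℝ)+2+r) = r/(((n:ℝ)+1+r)*((n:ℝ)+2+r)) := by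
        rw [div_sub_div _ _ (hp2 n).ne' (hp3 n).ne']
        congr 1; ring
      rw [hee, abs_div, abs_of_pos (mul_pos (hp2 n) (hp3 n))]
      rw [div_le_div_iff₀ (mul_pos (hp2 n) (hp3 n)) (by positivity)]
      have h1 := hlow n
      have h2 : ((n:ℝ)+1)*(1-|r|) ≤ (n:ℝ)+2+r := by linarith [hlow n]
      have hc : |r|/((1-|r|)*(1-|r|))*((1-|r|)*(1-|r|)) = |r| :=
        div_mul_cancel₀ _ (by positivity)
      have hmm : ((n:ℝ)+1)*(1-|r|)*(((n:ℝ)+1)*(1-|r|)) ≤ ((n:ℝ)+1+r)*((n:ℝ)+2+r) :=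
        mul_le_mul h1 h2 (by positivity) (hp2 n).le
      nlinarith [mul_le_mul_of_nonneg_left hmm
        (by positivity : (0:ℝ) ≤ |r|/((1-|r|)*(1-|r|))), hc, hp1 n]
    · have hsum : ∀ N : ℕ, ∑ i ∈ range N, (r/((i:ℝ)+1+r) - r/((i:ℝ)+2+r))
          = r/(1+r) - r/((N:ℝ)+1+r) := by
        intro N
        calc ∑ i ∈ range N, (r/((i:ℝ)+1+r) - r/((i:ℝ)+2+r))
            = ∑ i ∈ range N, (r/((i:ℝ)+1+r) - r/(((i+1:ℕ):ℝ)+1+r)) :=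
              Finset.sum_congr rfl (fun i _ => by push_cast; ring_nf)
          _ = r/(((0:ℕ):ℝ)+1+r) - r/((N:ℝ)+1+r) :=
              Finset.sum_range_sub' (fun i : ℕ => r/((i:ℝ)+1+r)) N
          _ = r/(1+r) - r/((N:ℝ)+1+r) := by norm_num
      simp_rw [hsum]
      have hlim : Tendsto (fun N : ℕ => r/((N:ℝ)+1+r)) atTop (𝓝 0) := by
        apply Filter.Tendsto.div_atTop tendsto_const_nhds
        apply Filter.tendsto_atTop_add_const_right _ (1+r)
          tendsto_natCast_atTop_atTop |>.congr (fun n => by ring)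
      simpa using tendsto_const_nhds.sub hlim
  -- shift of index
  have hshift : ∑' n : ℕ, r^2/((n:ℝ)*((n:ℝ)+r))
      = ∑' n : ℕ, r^2/(((n:ℝ)+1)*(((n:ℝ)+1)+r)) := by
    have hsum0 : Summable (fun n : ℕ => r^2/((n:ℝ)*((n:ℝ)+r))) := by
      apply (summable_nat_add_iff 1).mp
      exact hT.congr (fun n => by push_cast; ring_nf)
    rw [Summable.tsum_eq_zero_add hsum0]
    simp only [Nat.cast_zero, zero_mul, div_zero, zero_add]
    exact tsum_congr (fun n => by push_cast; ring_nf)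
  rw [hshift]
  -- main identity
  have key : r*(1+r) * ∑' n : ℕ, 1 / (((n:ℝ)+1)*(((n:ℝ)+1)+1+r))
      = (∑' n : ℕ, r^2/(((n:ℝ)+1)*(((n:ℝ)+1)+r))) + r/(1+r) := by
    rw [← tsum_mul_left, ← hdsum.tsum_eq, ← Summable.tsum_add hT hdsum.summable]
    refine tsum_congr (fun n => ?_)
    have e1 : ((n:ℝ)+1)+1+r = (n:ℝ)+2+r := by ring
    rw [e1]
    field_simp [(hp1 n).ne', (hp2 n).ne', (hp3 n).ne']
    ring
  linear_combination -key

theorem stmt13 (r : ℝ) (hr : |r| < 1) :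
    W r - Wbar r =
      r * (-1 / (1 + r) + (r + 1) * ∑' n : ℕ, 1 / (((n : ℝ) + 1) * (((n : ℝ) + 1) + 1 + r))) := by
  rw [part1 r hr, part2 r hr]
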